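/- Let k be a field of characteristic 2 and r ≥ 3 odd. In S = k[x_1,…,x_r,A]/(x_1+⋯+x_r), the element μ_r = ∏_{I ⊆ {1,…,r}, |I| even} (A − ∑_{i∈I} x_i) is invariant under the group W = S_r ⋉ (Z/2)^{r−1}, where S_r permutes the x_i and fixes A, and the subgroup (Z/2)^{r−1} is generated by the elements ε_1ε_j (2 ≤ j ≤ r) with ε_1ε_j fixing each x_m and sending A to A − x_1 − x_j. -/
import Mathlib


open MvPolynomial Finset

lemma aux_sum_symmDiff {α R : Type*} [DecidableEq α] [CommRing R] [CharP R 2]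
    (s t : Finset α) (f : α → R) :
    ∑ i ∈ symmDiff s t, f i = (∑ i ∈ s, f i) + ∑ i ∈ t, f i := by
  rw [symmDiff_def, Finset.sup_eq_union, Finset.sum_union disjoint_sdiff_sdiff]
  have hs : ∑ i ∈ s \ t, f i = ∑ i ∈ s, f i - ∑ i ∈ s ∩ t, f i := by
    rw [← Finset.sdiff_inter_self_left s t]
    exact Finset.sum_sdiff_eq_sub Finset.inter_subset_left
  have ht : ∑ i ∈ t \ s, f i = ∑ i ∈ t, f i - ∑ i ∈ s ∩ t, f i := by
    rw [← Finset.sdiff_inter_self_left t s, Finset.inter_comm t s]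
    exact Finset.sum_sdiff_eq_sub (Finset.inter_comm s t ▸ Finset.inter_subset_left)
  have h2 : (∑ i ∈ s ∩ t, f i) + (∑ i ∈ s ∩ t, f i) = 0 :=
    CharTwo.add_self_eq_zero _
  rw [hs, ht]
  linear_combination -h2

lemma aux_even_symmDiff {α : Type*} [DecidableEq α] (a t : Finset α)
    (hteven : Even t.card) (ha : Even a.card) : Even ((symmDiff a t).card) := by
  have h1 : (symmDiff a t).card = (a \ t).card + (t \ a).card := by
    rw [symmDiff_def, Finset.sup_eq_union,
      Finset.card_union_of_disjoint disjoint_sdiff_sdiff]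
  have h2 := Finset.card_sdiff_add_card_inter a t
  have h3 := Finset.card_sdiff_add_card_inter t a
  rw [Finset.inter_comm t a] at h3
  rw [Nat.even_iff] at ha hteven ⊢
  omega

/-- Let `k` be a field of characteristic 2 and `r ≥ 3` odd. In
`S = k[x₁,…,x_r,A]/(x₁+⋯+x_r)`, the element
`μ_r = ∏_{I ⊆ {1,…,r}, |I| even} (A − ∑_{i∈I} x_i)` is invariant under
`W = S_r ⋉ (ℤ/2)^{r−1}`: it is fixed (in the quotient) by every permutation of
the `x_i`, and by each generator `ε₁ε_j` (`2 ≤ j ≤ r`) sending `A ↦ A − x₁ − x_j`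
and fixing the `x_m`. `Sum.inl m` indexes `x_{m+1}`, `Sum.inr ()` indexes `A`. -/
theorem mu_r_invariant_r_odd
    (k : Type*) [Field k] [CharP k 2] (r : ℕ) (hr : 3 ≤ r) (hodd : Odd r)
    (I : Ideal (MvPolynomial (Fin r ⊕ Unit) k))
    (hI : I = Ideal.span ({∑ i : Fin r, X (Sum.inl i)} : Set (MvPolynomial (Fin r ⊕ Unit) k)))
    (μ : MvPolynomial (Fin r ⊕ Unit) k)
    (hμ : μ = ∏ s ∈ ((Finset.univ : Finset (Fin r)).powerset.filter fun s => Even s.card),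
        (X (Sum.inr ()) - ∑ i ∈ s, X (Sum.inl i))) :
    (∀ σ : Equiv.Perm (Fin r),
        Ideal.Quotient.mk I (rename (Sum.map σ id) μ) = Ideal.Quotient.mk I μ) ∧
      ∀ j : Fin r, j ≠ (⟨0, by omega⟩ : Fin r) →
        Ideal.Quotient.mk I
            (MvPolynomial.aeval (R := k)
              (fun v : Fin r ⊕ Unit =>
                match v with
                | Sum.inl m => X (Sum.inl m)
                | Sum.inr _ =>
                    X (Sum.inr ()) - X (Sum.inl (⟨0, by omega⟩ : Fin r)) - X (Sum.inl j))
              μ) =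
          Ideal.Quotient.mk I μ := by
  subst hμ
  haveI : CharP (MvPolynomial (Fin r ⊕ Unit) k) 2 := inferInstance
  constructor
  · intro σ
    congr 1
    rw [map_prod]
    refine Finset.prod_nbij' (fun s => s.image σ) (fun s => s.image σ.symm)
      ?_ ?_ ?_ ?_ ?_
    · intro a ha
      simp only [Finset.mem_filter, Finset.mem_powerset] at ha
      refine Finset.mem_filter.2 ⟨Finset.mem_powerset.2 (Finset.subset_univ _), ?_⟩
      rw [Finset.card_image_of_injective _ σ.injective]; exact ha.2
    · intro a ha
      simp only [Finset.mem_filter, Finset.mem_powerset] at ha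
      refine Finset.mem_filter.2 ⟨Finset.mem_powerset.2 (Finset.subset_univ _), ?_⟩
      rw [Finset.card_image_of_injective _ σ.symm.injective]; exact ha.2
    · intro a _
      simp [Finset.image_image]
    · intro a _
      simp [Finset.image_image]
    · intro a _
      rw [map_sub, rename_X, map_sum, Finset.sum_image
        (fun x _ y _ h => σ.injective h)]
      simp [rename_X]
  · intro j hj
    set z : Fin r := (⟨0, by omega⟩ : Fin r) with hz
    have hzj : z ≠ j := fun h => hj h.symm
    congr 1
    rw [map_prod]
    refine Finset.prod_nbij' (fun s => symmDiff s ({z, j} : Finset (Fin r)))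
      (fun s => symmDiff s ({z, j} : Finset (Fin r))) ?_ ?_ ?_ ?_ ?_
    · intro a ha
      simp only [Finset.mem_filter, Finset.mem_powerset] at ha
      exact Finset.mem_filter.2 ⟨Finset.mem_powerset.2 (Finset.subset_univ _),
        aux_even_symmDiff a _ (by rw [Finset.card_pair hzj]; exact ⟨1, rfl⟩) ha.2⟩
    · intro a ha
      simp only [Finset.mem_filter, Finset.mem_powerset] at ha
      exact Finset.mem_filter.2 ⟨Finset.mem_powerset.2 (Finset.subset_univ _),
        aux_even_symmDiff a _ (by rw [Finset.card_pair hzj]; exact ⟨1, rfl⟩) ha.2⟩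
    · intro a _
      exact symmDiff_symmDiff_cancel_right _ a
    · intro a _
      exact symmDiff_symmDiff_cancel_right _ a
    · intro a _
      rw [map_sub, map_sum]
      simp only [aeval_X]
      rw [aux_sum_symmDiff, Finset.sum_pair hzj]
      ring
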